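/- arXiv:2105.08991 — 7 statements merged into one kernel-verified Lean document; each statement's English description precedes it below -/
import Mathlib

section
/- With the same coupling as above, for every event word w, J(i+1, w) ≤ J(i, w) + 1. Equivalently, starting from states (i+1, 0) and (i, 1) and applying the same event sequence, the completed-job count from (i+1, 0) never exceeds that from (i, 1). -/
/-- Events in the M/M/1-type production system. -/
inductive Event where
  | arrival : Event
  | service : Event

/-- One transition of the production system on states `(queue, produced)`. -/
def step : ℕ × ℕ → Event → ℕ × ℕ
  | (q, j), Event.arrival => (q + 1, j)
  | (q, j), Event.service => if q = 0 then (q, j) else (q - 1, j + 1)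

/-- Number of completed jobs after applying event word `w` starting from `i` waiting jobs
and `0` completed jobs. -/
def J (i : ℕ) (w : List Event) : ℕ := (w.foldl step (i, 0)).2

/-- State reached after applying event word `w` from state `s`. -/
def run (s : ℕ × ℕ) (w : List Event) : ℕ × ℕ := w.foldl step s

lemma run_shift (w : List Event) : ∀ q j : ℕ,
    run (q, j + 1) w = ((run (q, j) w).1, (run (q, j) w).2 + 1) := by
  induction w with
  | nil => intro q j; simp [run]
  | cons e w ih =>
    intro q j
    cases e with
    | arrival => simpa [run, step] using ih (q + 1) j
    | service =>
      by_cases h : q = 0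
      · simpa [run, step, h] using ih 0 j
      · simpa [run, step, h] using ih (q - 1) (j + 1)

lemma couple (w : List Event) : ∀ q j : ℕ,
    (run (q + 1, j) w).1 = (run (q, j + 1) w).1 + 1 ∧
      (run (q + 1, j) w).2 + 1 = (run (q, j + 1) w).2 ∨
    run (q + 1, j) w = run (q, j + 1) w := by
  induction w with
  | nil => intro q j; left; simp [run]
  | cons e w ih =>
    intro q j
    cases e with
    | arrival => simpa [run, step] using ih (q + 1) j
    | service =>
      by_cases h : q = 0
      · subst h
        right
        simp [run, step]
      · have : q - 1 + 1 = q := Nat.succ_pred_eq_of_pos (Nat.pos_of_ne_zero h)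
        simpa [run, step, h, this] using ih (q - 1) (j + 1)

/-- Pathwise bound: one extra initial customer increases cumulative production by at most one.
Equivalently, starting from `(i+1, 0)` and `(i, 1)` and applying the same event word, the
completed-job count from `(i+1, 0)` never exceeds that from `(i, 1)`. -/
theorem J_succ_le (i : ℕ) (w : List Event) :
    J (i + 1) w ≤ J i w + 1 ∧ (run (i + 1, 0) w).2 ≤ (run (i, 1) w).2 := by
  have hc := couple w i 0
  simp only [Nat.zero_add] at hc
  have h2 : (run (i + 1, 0) w).2 ≤ (run (i, 1) w).2 := by
    rcases hc with ⟨_, h⟩ | h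
    · omega
    · rw [h]
  refine ⟨?_, h2⟩
  have hs := run_shift w i 0
  simp only [Nat.zero_add] at hs
  have : (run (i, 1) w).2 = (run (i, 0) w).2 + 1 := by rw [hs]
  have hJ1 : J (i + 1) w = (run (i + 1, 0) w).2 := rfl
  have hJ2 : J i w = (run (i, 0) w).2 := rfl
  omega
end

section
/- Combining the two coupling lemmas: for every initial queue length i and every event word w, J(i, w) ≤ J(i+1, w) ≤ J(i, w) + 1. -/
/-- Coupling relation: the second state has either one more queued job, or one more
completed job. -/
def QRel (s t : ℕ × ℕ) : Prop :=
  (t.1 = s.1 + 1 ∧ t.2 = s.2) ∨ (t.1 = s.1 ∧ t.2 = s.2 + 1)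

lemma rel_step (s t : ℕ × ℕ) (e : Event) (h : QRel s t) : QRel (step s e) (step t e) := by
  obtain ⟨q, j⟩ := s
  obtain ⟨q', j'⟩ := t
  simp only [QRel] at h ⊢
  cases e <;> simp only [step] <;> [omega; (split_ifs <;> simp_all <;> omega)]

lemma rel_fold (w : List Event) : ∀ s t : ℕ × ℕ, QRel s t →
    QRel (w.foldl step s) (w.foldl step t) := by
  induction w with
  | nil => intro s t h; exact h
  | cons e w ih => intro s t h; exact ih _ _ (rel_step s t e h)

/-- Combined coupling lemma: for every initial queue length `i` and every event word `w`,
`J(i, w) ≤ J(i+1, w) ≤ J(i, w) + 1`. -/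
theorem J_sandwich (i : ℕ) (w : List Event) :
    J i w ≤ J (i + 1) w ∧ J (i + 1) w ≤ J i w + 1 := by
  have h := rel_fold w (i, 0) (i + 1, 0) (Or.inl ⟨rfl, rfl⟩)
  unfold J
  rcases h with ⟨_, h2⟩ | ⟨_, h2⟩ <;> omega
end

section
/- Let J(i) and J(i+1) be the random cumulative productions over a fixed time horizon starting from i and i+1 waiting jobs, driven by the same random event sequence (i.i.d. events, each an Arrival with probability λ/(λ+μ) or a Service with probability μ/(λ+μ)). Then J(i+1) stochastically dominates J(i): for all j, P(J(i+1) > j) ≥ P(J(i) > j). -/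
open scoped ENNReal NNReal

/-- PMF of a single event: arrival with probability `p`, service with probability `1 - p`. -/
noncomputable def eventPMF (p : ℝ≥0∞) (hp : p ≤ 1) : PMF Event :=
  (PMF.ofFintype (fun b => cond b p (1 - p)) (by simp [hp])).map (fun b => if b then Event.arrival else Event.service)

/-- PMF of a word of `n` i.i.d. events. -/
noncomputable def iidWord (p : ℝ≥0∞) (hp : p ≤ 1) : ℕ → PMF (List Event)
  | 0 => PMF.pure []
  | n + 1 => (eventPMF p hp).bind fun e => (iidWord p hp n).map (fun w => e :: w)

/-!
The state `(i + 1, 0)` dominates `(i, 0)` in the order "produced no less, and queue plus produced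
no less", and every event preserves this order. So along any fixed event word the production
from `i + 1` waiting jobs is at least that from `i`, and the event `J i > j` is contained in
`J (i + 1) > j`.
-/

/-- Comparing the production alone is not preserved by `step`: a state that has produced more
but holds fewer jobs may be overtaken. The total `queue + produced` is what rules this out. -/
def StateLE (s t : ℕ × ℕ) : Prop := s.2 ≤ t.2 ∧ s.1 + s.2 ≤ t.1 + t.2

lemma step_mono {s t : ℕ × ℕ} (h : StateLE s t) (e : Event) :
    StateLE (step s e) (step t e) := by
  obtain ⟨q, j⟩ := s
  obtain ⟨q', j'⟩ := t
  unfold StateLE at h ⊢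
  cases e with
  | arrival => dsimp only [step] at h ⊢; omega
  | service => dsimp only [step] at h ⊢; split_ifs <;> dsimp only <;> omega

lemma foldl_step_mono {s t : ℕ × ℕ} (h : StateLE s t) (w : List Event) :
    StateLE (w.foldl step s) (w.foldl step t) := by
  induction w generalizing s t with
  | nil => exact h
  | cons e w ih => exact ih (step_mono h e)

lemma J_le_J_succ (i : ℕ) (w : List Event) : J i w ≤ J (i + 1) w :=
  (foldl_step_mono (s := (i, 0)) (t := (i + 1, 0)) ⟨le_rfl, Nat.le_succ _⟩ w).1

/-- Stochastic dominance of cumulative production in the initial queue length: with events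
i.i.d., each an arrival with probability `λ/(λ+μ)` and a service with probability `μ/(λ+μ)`,
`P(J(i+1) > j) ≥ P(J(i) > j)` for all `j`. -/
theorem J_stochastic_dominance (lam mu : ℝ) (hlam : 0 < lam) (hmu : 0 < mu) (n i j : ℕ) :
    (iidWord (ENNReal.ofReal (lam / (lam + mu)))
        (ENNReal.ofReal_le_one.mpr ((div_le_one (by linarith)).mpr (by linarith))) n).toOuterMeasure
        {w | j < J i w} ≤
      (iidWord (ENNReal.ofReal (lam / (lam + mu)))
        (ENNReal.ofReal_le_one.mpr ((div_le_one (by linarith)).mpr (by linarith))) n).toOuterMeasure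
        {w | j < J (i + 1) w} :=
  MeasureTheory.OuterMeasure.mono _ fun w (hw : j < J i w) => hw.trans_le (J_le_J_succ i w)
end

section
/- Consider the discrete-time production coupling: from initial backlogs i and i+1, apply the same sequence of period outcomes (d₁,c₁), (d₂,c₂), … where in each period a backlog q with demand d and capacity c transitions to backlog (q + d − c)⁺ and production increases by min(q + d, c). Let Jₜ(i) denote cumulative production after t periods starting from backlog i. Then for every outcome sequence and every t, Jₜ(i) ≤ Jₜ(i+1). -/
/-- One period of the discrete-time capacitated production system: from backlog `q` and
cumulative production `j`, with demand `d` and capacity `c`, the backlog becomes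
`(q + d − c)⁺` and production increases by `min (q + d) c`. -/
def dstep : ℕ × ℕ → ℕ × ℕ → ℕ × ℕ
  | (q, j), (d, c) => (q + d - c, j + min (q + d) c)

/-- Cumulative production after the periods in `w` starting from backlog `i`. -/
def Jd (i : ℕ) (w : List (ℕ × ℕ)) : ℕ := (w.foldl dstep (i, 0)).2

lemma foldl_dstep_mono (w : List (ℕ × ℕ)) :
    ∀ q₁ j₁ q₂ j₂ : ℕ, q₁ ≤ q₂ → j₁ ≤ j₂ →
      (w.foldl dstep (q₁, j₁)).1 ≤ (w.foldl dstep (q₂, j₂)).1 ∧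
      (w.foldl dstep (q₁, j₁)).2 ≤ (w.foldl dstep (q₂, j₂)).2 := by
  induction w with
  | nil => intro q₁ j₁ q₂ j₂ hq hj; exact ⟨hq, hj⟩
  | cons p w ih =>
    intro q₁ j₁ q₂ j₂ hq hj
    obtain ⟨d, c⟩ := p
    simp only [List.foldl_cons, dstep]
    exact ih _ _ _ _ (Nat.sub_le_sub_right (Nat.add_le_add_right hq d) c)
      (Nat.add_le_add hj (min_le_min_right c (Nat.add_le_add_right hq d)))

/-- Pathwise monotonicity in the discrete-time model: for every outcome sequence `w` of
(demand, capacity) pairs (hence for every horizon, taking prefixes), `Jₜ(i) ≤ Jₜ(i+1)`. -/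
theorem Jd_mono (i : ℕ) (w : List (ℕ × ℕ)) (t : ℕ) :
    Jd i (w.take t) ≤ Jd (i + 1) (w.take t) := by
  exact (foldl_dstep_mono (w.take t) i 0 (i+1) 0 (Nat.le_succ i) le_rfl).2
end

section
/- In the discrete-time production coupling, for every outcome sequence and every t, Jₜ(i+1) ≤ Jₜ(i) + 1. -/
lemma dstep_invariant (w : List (ℕ × ℕ)) : ∀ a b a' b', a ≤ a' → a' ≤ a + 1 →
    a' + b' = a + b + 1 →
    (w.foldl dstep (a, b)).1 ≤ (w.foldl dstep (a', b')).1 ∧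
    (w.foldl dstep (a', b')).1 ≤ (w.foldl dstep (a, b)).1 + 1 ∧
    (w.foldl dstep (a', b')).1 + (w.foldl dstep (a', b')).2 =
      (w.foldl dstep (a, b)).1 + (w.foldl dstep (a, b)).2 + 1 := by
  induction w with
  | nil => intro a b a' b' h1 h2 h3; simpa using ⟨h1, h2, h3⟩
  | cons dc w ih =>
    intro a b a' b' h1 h2 h3
    obtain ⟨d, c⟩ := dc
    simp only [List.foldl_cons, dstep]
    exact ih _ _ _ _ (by omega) (by omega) (by omega)

/-- Pathwise upper bound in the discrete-time model: for every outcome sequence `w` and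
every horizon `t`, `Jₜ(i+1) ≤ Jₜ(i) + 1`. -/
theorem Jd_succ_le (i : ℕ) (w : List (ℕ × ℕ)) (t : ℕ) :
    Jd (i + 1) (w.take t) ≤ Jd i (w.take t) + 1 := by
  have h := dstep_invariant (w.take t) i 0 (i + 1) 0 (by omega) (by omega) (by omega)
  unfold Jd
  omega
end

section
/- In the continuous-time coupling, the difference process is absorbing: if at some point the two coupled trajectories (started from (i,0) and (i+1,0)) reach states with equal queue length, then their production counts differ by exactly 1 from that point on forever (under any further common event sequence). -/
/-- The coupling is absorbing: once the two trajectories have equal queue length `q` and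
production counts differing by 1, then after any further common event word the queue lengths
still coincide and the production counts still differ by exactly 1. -/
theorem coupling_absorbing (q j : ℕ) (w : List Event) :
    (run (q, j + 1) w).1 = (run (q, j) w).1 ∧
      (run (q, j + 1) w).2 = (run (q, j) w).2 + 1 := by
  induction w generalizing q j with
  | nil => simp [run]
  | cons e w ih =>
    cases e with
    | arrival => simpa [run, step] using ih (q + 1) j
    | service =>
      by_cases h : q = 0
      · simpa [run, step, h] using ih q j
      · simpa [run, step, h] using ih (q - 1) (j + 1)
end

section
/- For the coupled continuous-time trajectories started at (i, 0) and (i+1, 0) and driven by any common event word, at every time the pair of states is either of the form ((q+1, j), obtained from i+1 start, and (q, j), from i start) with equal production, or of the form ((q, j+1) and (q, j)) — i.e., the invariant (Δqueue, Δproduction) ∈ {(1,0), (0,1)} holds along the whole trajectory. -/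
/-- Invariant of the coupled trajectories started at `(i,0)` and `(i+1,0)`: after any common
event word, either the queue lengths differ by 1 and productions are equal, or the queue
lengths are equal and the productions differ by 1: `(Δqueue, Δproduction) ∈ {(1,0), (0,1)}`. -/
theorem coupling_invariant (i : ℕ) (w : List Event) :
    ((run (i + 1, 0) w).1 = (run (i, 0) w).1 + 1 ∧
        (run (i + 1, 0) w).2 = (run (i, 0) w).2) ∨
      ((run (i + 1, 0) w).1 = (run (i, 0) w).1 ∧
        (run (i + 1, 0) w).2 = (run (i, 0) w).2 + 1) := by
  induction w using List.reverseRecOn with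
  | nil => left; simp [run]
  | append_singleton t e ih =>
    have hrun : ∀ s : ℕ × ℕ, run s (t ++ [e]) = step (run s t) e := by
      intro s; simp [run, List.foldl_append]
    rw [hrun, hrun]
    rcases ih with ⟨h1, h2⟩ | ⟨h1, h2⟩
    · cases e with
      | arrival => left; simp [step, h1, h2]
      | service =>
        rcases h : run (i, 0) t with ⟨q, j⟩
        rw [h] at h1 h2
        have ha : run (i + 1, 0) t = (q + 1, j) := Prod.ext h1 h2
        rw [ha]
        simp only [step]
        cases q with
        | zero => right; simp
        | succ n => left; simp
    · cases e with
      | arrival => right; simp [step, h1, h2]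
      | service =>
        rcases h : run (i, 0) t with ⟨q, j⟩
        rw [h] at h1 h2
        have ha : run (i + 1, 0) t = (q, j + 1) := Prod.ext h1 h2
        rw [ha]
        simp only [step]
        cases q with
        | zero => right; simp
        | succ n => right; simp
end
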